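/- There exists a strictly increasing sequence ⟨e_n : n ∈ ℕ⟩ such that W_{e_n} = {e_m : m > n} for all n, and the sequence n ↦ e_n is not computable. -/

import Mathlib

/-- The e-th partial computable function in a standard numbering. -/
def phi (e : ℕ) : ℕ →. ℕ :=
  Nat.Partrec.Code.eval (Denumerable.ofNat Nat.Partrec.Code e)

/-- W e is the domain of the e-th partial computable function. -/
def W (e : ℕ) : Set ℕ := (phi e).Dom

/-!
Let `K = {k | 0 ∈ W k}` be the halting set. By the recursion theorem there is a code `c` such that
`W (g k) = {g k' | k' > k, k' ∈ K}` for the injective computable map `g k = ⌜curry c k⌝`: on input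
`⟨k, x⟩`, `c` recognises `x` as `g k'` and then runs the computation witnessing `k' ∈ K`.
Enumerating `K` increasingly as `K = {k₀ < k₁ < ⋯}`, the sequence `e n = g kₙ` has
`W (e n) = {e m | m > n}`. It is not computable, since otherwise `K = g⁻¹(range e)` would be
decidable: the range of a strictly increasing computable sequence is decidable.
-/

open Nat.Partrec Code Encodable Denumerable

theorem Nat.exists_gt_nth_iff {p : ℕ → Prop} (hp : {k | p k}.Infinite) (n : ℕ)
    (q : ℕ → Prop) :
    (∃ m, n < m ∧ q (nth p m)) ↔ ∃ k, nth p n < k ∧ p k ∧ q k := by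
  classical
  constructor
  · rintro ⟨m, hnm, hq⟩
    exact ⟨nth p m, (nth_lt_nth hp).2 hnm, nth_mem_of_infinite hp m, hq⟩
  · rintro ⟨k, hnk, hk, hq⟩
    rw [← nth_count hk] at hnk hq
    exact ⟨count p k, (nth_lt_nth hp).1 hnk, hq⟩

theorem StrictMono.computablePred_mem_range {e : ℕ → ℕ} (hmono : StrictMono e)
    (he : Computable e) : ComputablePred (· ∈ Set.range e) := by
  have hex : ∀ x, ∃ n, x ≤ e n := fun x => ⟨x, hmono.id_le x⟩
  have hfind : Computable fun x => Nat.find (hex x) :=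
    Computable.find (P := fun x n => x ≤ e n)
      (Primrec.nat_le.decide.to_comp.comp Computable.fst (he.comp Computable.snd)).computablePred
      hex
  have hrange : ∀ x, x ∈ Set.range e ↔ e (Nat.find (hex x)) = x := by
    intro x
    refine ⟨?_, fun h => ⟨_, h⟩⟩
    rintro ⟨m, rfl⟩
    exact le_antisymm (hmono.monotone (Nat.find_min' _ le_rfl)) (Nat.find_spec (hex (e m)))
  exact ((Primrec.eq.decide.to_comp.comp (he.comp hfind) Computable.id).computablePred).of_eq
    fun x => (hrange x).symm

theorem encode_curry_strictMono (c : Code) : StrictMono fun k => encode (curry c k) := by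
  -- `Code.const (n + 1)` is `comp succ (Code.const n)`
  have hconst : StrictMono fun n => encode (Code.const n) :=
    strictMono_nat_of_lt_succ fun n => (encode_lt_comp Code.succ (Code.const n)).2
  intro k k' h
  have h1 := Nat.pair_lt_pair_left (encode Code.id) (hconst h)
  simp only [encodeCode_eq] at h1
  have h2 := Nat.pair_lt_pair_right (encodeCode c)
    (show encodeCode ((Code.const k).pair Code.id) < encodeCode ((Code.const k').pair Code.id) by
      simp only [encodeCode]; omega)
  simp only [curry, encodeCode_eq, encodeCode] at h2 ⊢
  omega

theorem W_encode (c : Code) : W (encode c) = (eval c).Dom := by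
  rw [W, phi, ofNat_encode]

/-- On input `⟨k, x⟩`, search for the `k' > k` with `x = encode (curry d k')`, unique since `curry`
is injective, and then halt iff `A k'`. -/
def curryTail (A : ℕ → Prop) (d : Code) (p : ℕ) : Part ℕ :=
  (Nat.rfind fun k => Part.some (decide (p.unpair.1 < k ∧ encode (curry d k) = p.unpair.2))).bind
    fun k => (Part.assert (A k) fun _ => Part.some ()).map fun _ => 0

theorem curryTail_partrec {A : ℕ → Prop} (hA : REPred A) : Partrec₂ (curryTail A) := by
  have hsearch : Computable₂ fun (dp : Code × ℕ) k =>
      decide (dp.2.unpair.1 < k ∧ encode (curry dp.1 k) = dp.2.unpair.2) :=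
    (PrimrecPred.and
      (Primrec.nat_lt.comp (Primrec.fst.comp (Primrec.unpair.comp (Primrec.snd.comp Primrec.fst)))
        Primrec.snd)
      (Primrec.eq.comp (Primrec.encode.comp (primrec₂_curry.comp (Primrec.fst.comp Primrec.fst)
        Primrec.snd)) (Primrec.snd.comp (Primrec.unpair.comp (Primrec.snd.comp Primrec.fst))))
      ).decide.to_comp
  exact (Partrec.rfind hsearch.partrec₂).bind
    ((hA.comp Computable.snd).map (Computable.const 0).to₂)

theorem curryTail_dom (A : ℕ → Prop) (d : Code) (k x : ℕ) :
    (curryTail A d (Nat.pair k x)).Dom ↔ ∃ k', k < k' ∧ A k' ∧ x = encode (curry d k') := by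
  have hsearch : ∀ k', k' ∈ Nat.rfind (fun j => Part.some
      (decide ((Nat.pair k x).unpair.1 < j ∧ encode (curry d j) = (Nat.pair k x).unpair.2))) ↔
      k < k' ∧ x = encode (curry d k') := by
    intro k'
    refine Nat.mem_rfind.trans ?_
    simp only [Nat.unpair_pair, Part.mem_some_iff, Bool.true_eq, Bool.false_eq, decide_eq_true_eq,
      decide_eq_false_iff_not]
    refine ⟨fun ⟨h, _⟩ => ⟨h.1, h.2.symm⟩, fun h => ⟨⟨h.1, h.2.symm⟩, fun {m} hm hm' => ?_⟩⟩
    have := (curry_inj (encode_injective (hm'.2.trans h.2))).2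
    omega
  simp only [curryTail, Part.dom_iff_mem, Part.mem_bind_iff, Part.mem_map_iff, Part.mem_assert_iff,
    hsearch]
  constructor
  · rintro ⟨-, k', ⟨hk, hx⟩, -, ⟨hAk, -⟩, -⟩
    exact ⟨k', hk, hAk, hx⟩
  · rintro ⟨k', hk, hAk, hx⟩
    exact ⟨0, k', ⟨hk, hx⟩, (), ⟨hAk, Part.mem_some _⟩, rfl⟩

theorem exists_strictMono_computable_W_eq {A : ℕ → Prop} (hA : REPred A) :
    ∃ g : ℕ → ℕ, StrictMono g ∧ Computable g ∧
      ∀ k, W (g k) = {x | ∃ k', k < k' ∧ A k' ∧ x = g k'} := by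
  obtain ⟨c, hc⟩ := fixed_point₂ (curryTail_partrec hA)
  refine ⟨fun k => encode (curry c k), encode_curry_strictMono c,
    (Primrec.encode.comp (primrec₂_curry.comp (Primrec.const c) Primrec.id)).to_comp,
    fun k => Set.ext fun x => ?_⟩
  rw [Set.mem_ofPred_eq, ← curryTail_dom, ← hc, ← eval_curry, W_encode]
  rfl

def haltingSet : Set ℕ := {k | 0 ∈ W k}

theorem encode_const_mem_haltingSet (n : ℕ) : encode (Code.const n) ∈ haltingSet := by
  simp [haltingSet, W_encode, eval_const]

theorem haltingSet_infinite : haltingSet.Infinite :=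
  Set.infinite_of_injective_forall_mem (fun _ _ h => const_inj (encode_injective h))
    encode_const_mem_haltingSet

theorem rePred_mem_haltingSet : REPred (· ∈ haltingSet) :=
  (eval_part.comp (Computable.ofNat Code) (Computable.const 0)).dom_re

theorem not_computablePred_mem_haltingSet : ¬ComputablePred (· ∈ haltingSet) := fun h =>
  ComputablePred.halting_problem 0 <| ComputablePred.computable_of_manyOneReducible
    ⟨encode, Computable.encode, fun c => by
      show (eval c 0).Dom ↔ 0 ∈ W (encode c)
      rw [W_encode]; rfl⟩ h

theorem stmt_5 :
    ∃ e : ℕ → ℕ, StrictMono e ∧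
      (∀ n : ℕ, W (e n) = {x | ∃ m, n < m ∧ x = e m}) ∧
      ¬ Computable e := by
  obtain ⟨g, hg, hg_comp, hW⟩ := exists_strictMono_computable_W_eq rePred_mem_haltingSet
  have hinf : {k | k ∈ haltingSet}.Infinite := haltingSet_infinite
  have hnth : StrictMono (Nat.nth (· ∈ haltingSet)) := Nat.nth_strictMono hinf
  refine ⟨g ∘ Nat.nth (· ∈ haltingSet), hg.comp hnth, fun n => ?_, fun he => ?_⟩
  · ext x
    rw [Function.comp_apply, hW]
    exact (Nat.exists_gt_nth_iff hinf n (x = g ·)).symm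
  · have hreduce : ∀ k, k ∈ haltingSet ↔ g k ∈ Set.range (g ∘ Nat.nth (· ∈ haltingSet)) := by
      intro k
      rw [Set.range_comp, hg.injective.mem_set_image, Nat.range_nth_of_infinite hinf]
      rfl
    exact not_computablePred_mem_haltingSet <| ComputablePred.computable_of_manyOneReducible
      ⟨g, hg_comp, hreduce⟩ ((hg.comp hnth).computablePred_mem_range he)
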